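/- Let p be an odd prime. Then the only representation of N = 4p as a sum of r ≥ 2 successive odd positive numbers is the two-term sum (2p-1) + (2p+1); that is, if 4p = ∑_{i=0}^{r-1} (a + 2i) with r ≥ 2 and a an odd positive integer, then r = 2 and a = 2p - 1. -/

import Mathlib

/-! The sum of `r` successive odd numbers starting at `a` is `r * (a + r - 1)`, and its two
factors have the same parity. For the sum to be `4 * p` both must therefore be even, say `2s`
and `2t` with `s * t = p` and `s ≤ t`; primality of `p` forces `s = 1`, i.e. `r = 2`. -/

open Finset

theorem sum_range_add_two_mul (a r : ℕ) :
    ∑ i ∈ range r, (a + 2 * i) = r * (a + r - 1) := by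
  induction r with
  | zero => simp
  | succ r ih =>
    rw [sum_range_succ, ih]
    cases r with
    | zero => simp
    | succ r =>
      simp only [Nat.add_sub_cancel, ← Nat.add_assoc]
      ring_nf

theorem Odd.even_and_even_of_even_mul {a r : ℕ} (hao : Odd a)
    (h : Even (r * (a + r - 1))) : Even r ∧ Even (a + r - 1) := by
  have hsame : Even (a + r - 1) ↔ Even r := by
    obtain ⟨k, rfl⟩ := hao
    rw [show 2 * k + 1 + r - 1 = 2 * k + r by omega]
    simp [Nat.even_add]
  rw [Nat.even_mul, hsame, or_self] at h
  exact ⟨h, hsame.mpr h⟩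

theorem four_mul_prime_unique_odd_sum_general (p : ℕ) (hp : p.Prime)
    (r a : ℕ) (hao : Odd a)
    (h : 4 * p = ∑ i ∈ Finset.range r, (a + 2 * i)) :
    r = 2 ∧ a = 2 * p - 1 := by
  rw [sum_range_add_two_mul] at h
  have ha : 1 ≤ a := hao.pos
  have heven : Even (r * (a + r - 1)) := h ▸ ⟨2 * p, by ring⟩
  obtain ⟨⟨s, rfl⟩, ⟨t, ht⟩⟩ := hao.even_and_even_of_even_mul heven
  have hst : s * t = p := by
    rw [ht] at h
    nlinarith
  have hs : s = 1 := by
    rcases Nat.prime_mul_iff.mp (hst ▸ hp) with ⟨hs, rfl⟩ | ⟨-, hs⟩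
    · have := hs.two_le
      omega
    · exact hs
  subst hs
  omega

/-- For an odd prime p, the only representation of 4p as a sum of r ≥ 2
successive odd positive numbers is (2p-1) + (2p+1). -/
theorem four_mul_prime_unique_odd_sum (p : ℕ) (hp : p.Prime) (hodd : Odd p)
    (r a : ℕ) (hr : 2 ≤ r) (ha : 0 < a) (hao : Odd a)
    (h : 4 * p = ∑ i ∈ Finset.range r, (a + 2 * i)) :
    r = 2 ∧ a = 2 * p - 1 :=
  four_mul_prime_unique_odd_sum_general p hp r a hao h
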